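/- arXiv:1110.5824 — 2 statements merged into one kernel-verified Lean document; each statement's English description precedes it below -/
import Mathlib

section
/- Let y : [S,T] → ℝ be differentiable with y(S) = y_S > 0 and suppose y'(t) ≤ -(κ/2)·y(t)^{1+ε} for all t with y(t) > 0, where κ, ε > 0. Then for all t ∈ [S,T] with y(t) > 0, one has y(t) ≤ (2·y_S^ε / (κ·ε·y_S^ε·(t-S) + 2))^{1/ε}. In particular, y(t) ≤ (4/(κ·ε·(t-S)))^{1/ε} independently of y_S. -/
/-- Decay estimate for the differential inequality `y' ≤ -(κ/2) y^{1+ε}`. -/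
theorem power_decay_estimate (S T κ ε yS : ℝ) (y : ℝ → ℝ)
    (hκ : 0 < κ) (hε : 0 < ε) (hST : S ≤ T)
    (hinit : y S = yS) (hyS : 0 < yS)
    (hdiff : ∀ t ∈ Set.Icc S T, DifferentiableAt ℝ y t)
    (hineq : ∀ t ∈ Set.Icc S T, 0 < y t → deriv y t ≤ -(κ / 2) * y t ^ (1 + ε)) :
    ∀ t ∈ Set.Icc S T, 0 < y t →
      y t ≤ (2 * yS ^ ε / (κ * ε * yS ^ ε * (t - S) + 2)) ^ (1 / ε) ∧
      (S < t → y t ≤ (4 / (κ * ε * (t - S))) ^ (1 / ε)) := by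
  intro t ht hyt
  obtain ⟨htS, htT⟩ := ht
  have hsub : Set.Icc S t ⊆ Set.Icc S T := Set.Icc_subset_Icc_right htT
  have hcont : ContinuousOn y (Set.Icc S T) :=
    fun u hu => (hdiff u hu).continuousAt.continuousWithinAt
  -- positivity of y on [S, t]
  have hpos : ∀ s ∈ Set.Icc S t, 0 < y s := by
    by_contra h
    push_neg at h
    obtain ⟨s₀, hs₀, hs₀le⟩ := h
    set A := Set.Icc S t ∩ y ⁻¹' Set.Iic 0 with hA
    have hAne : A.Nonempty := ⟨s₀, hs₀, hs₀le⟩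
    have hclosed : IsClosed A := by
      apply ContinuousOn.preimage_isClosed_of_isClosed (hcont.mono hsub) isClosed_Icc isClosed_Iic
    have hAcomp : IsCompact A := isCompact_Icc.of_isClosed_subset hclosed Set.inter_subset_left
    obtain ⟨b, hbA⟩ : ∃ b, b ∈ A ∧ b = sSup A := ⟨sSup A, hAcomp.sSup_mem hAne, rfl⟩
    obtain ⟨⟨hbIcc, hble⟩, hbsup⟩ := hbA
    have hble0 : y b ≤ 0 := hble
    have hbt : b < t := by
      rcases lt_or_eq_of_le hbIcc.2 with h | h
      · exact h
      · exact absurd (h ▸ hble0) (not_le.2 hyt)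
    have hposIoc : ∀ s ∈ Set.Ioc b t, 0 < y s := by
      intro s hs
      by_contra hle
      push_neg at hle
      have hsA : s ∈ A := ⟨⟨le_trans hbIcc.1 hs.1.le, hs.2⟩, hle⟩
      have : s ≤ b := hbsup ▸ le_csSup hAcomp.bddAbove hsA
      exact absurd this (not_le.2 hs.1)
    have hanti : AntitoneOn y (Set.Icc b t) := by
      apply antitoneOn_of_deriv_nonpos (convex_Icc b t)
      · exact hcont.mono (Set.Icc_subset_Icc hbIcc.1 htT)
      · intro x hx
        rw [interior_Icc] at hx
        exact (hdiff x ⟨le_trans hbIcc.1 hx.1.le, le_trans hx.2.le htT⟩).differentiableWithinAt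
      · intro x hx
        rw [interior_Icc] at hx
        have hxmem : x ∈ Set.Icc S T := ⟨le_trans hbIcc.1 hx.1.le, le_trans hx.2.le htT⟩
        have hxpos : 0 < y x := hposIoc x ⟨hx.1, hx.2.le⟩
        have := hineq x hxmem hxpos
        have hpow : 0 < y x ^ (1 + ε) := Real.rpow_pos_of_pos hxpos _
        nlinarith
    have : y t ≤ y b := hanti ⟨le_rfl, hbt.le⟩ ⟨hbt.le, le_rfl⟩ hbt.le
    linarith
  -- the monotone auxiliary function g
  set g : ℝ → ℝ := fun u => y u ^ (-ε) - κ * ε / 2 * u with hg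
  have hgderiv : ∀ u ∈ Set.Icc S t,
      HasDerivAt g (deriv y u * (-ε) * y u ^ (-ε - 1) - κ * ε / 2) u := by
    intro u hu
    have h1 : HasDerivAt y (deriv y u) u := (hdiff u (hsub hu)).hasDerivAt
    have h2 := h1.rpow_const (p := -ε) (Or.inl (hpos u hu).ne')
    have h3 : HasDerivAt (fun x : ℝ => κ * ε / 2 * x) (κ * ε / 2) u := by
      simpa using (hasDerivAt_id u).const_mul (κ * ε / 2)
    exact h2.sub h3
  have hmono : MonotoneOn g (Set.Icc S t) := by
    apply monotoneOn_of_deriv_nonneg (convex_Icc S t)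
    · exact fun u hu => (hgderiv u hu).continuousAt.continuousWithinAt
    · intro x hx
      rw [interior_Icc] at hx
      exact ((hgderiv x ⟨hx.1.le, hx.2.le⟩).differentiableAt).differentiableWithinAt
    · intro x hx
      rw [interior_Icc] at hx
      have hxIcc : x ∈ Set.Icc S t := ⟨hx.1.le, hx.2.le⟩
      rw [(hgderiv x hxIcc).deriv]
      have hxpos : 0 < y x := hpos x hxIcc
      have hle := hineq x (hsub hxIcc) hxpos
      have hpow1 : 0 < y x ^ (-ε - 1) := Real.rpow_pos_of_pos hxpos _
      have hmul : y x ^ (1 + ε) * y x ^ (-ε - 1) = 1 := by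
        rw [← Real.rpow_add hxpos]
        have : 1 + ε + (-ε - 1) = 0 := by ring
        rw [this, Real.rpow_zero]
      have h1 : deriv y x * y x ^ (-ε - 1) ≤ -(κ / 2) := by
        calc deriv y x * y x ^ (-ε - 1)
            ≤ -(κ / 2) * y x ^ (1 + ε) * y x ^ (-ε - 1) :=
              mul_le_mul_of_nonneg_right hle hpow1.le
          _ = -(κ / 2) := by rw [mul_assoc, hmul, mul_one]
      nlinarith [h1, hε.le, hκ.le]
  have hkey : g S ≤ g t := hmono ⟨le_rfl, htS⟩ ⟨htS, le_rfl⟩ htS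
  simp only [hg, hinit] at hkey
  -- arithmetic
  set a := yS ^ ε with ha
  have hapos : 0 < a := Real.rpow_pos_of_pos hyS _
  set D := κ * ε * a * (t - S) + 2 with hD
  have hDpos : 0 < D := by
    have : 0 ≤ t - S := by linarith
    have : 0 ≤ κ * ε * a * (t - S) := by positivity
    linarith [this]
  have hySneg : yS ^ (-ε) = a⁻¹ := by rw [Real.rpow_neg hyS.le, ha]
  have hytneg : y t ^ (-ε) = (y t ^ ε)⁻¹ := by rw [Real.rpow_neg hyt.le]
  have hytpow : 0 < y t ^ ε := Real.rpow_pos_of_pos hyt _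
  have hkey2 : D / (2 * a) ≤ (y t ^ ε)⁻¹ := by
    rw [← hytneg]
    rw [hySneg] at hkey
    rw [div_le_iff₀ (by positivity)]
    have : a⁻¹ * (2 * a) = 2 := by field_simp
    nlinarith [hkey]
  have hbound : y t ^ ε ≤ 2 * a / D := by
    have h1 : ((y t ^ ε)⁻¹)⁻¹ ≤ (D / (2 * a))⁻¹ :=
      inv_anti₀ (by positivity) hkey2
    rwa [inv_inv, inv_div] at h1
  have hyrw : y t = (y t ^ ε) ^ (1 / ε) := by
    rw [← Real.rpow_mul hyt.le, mul_one_div_cancel hε.ne', Real.rpow_one]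
  have hfirst : y t ≤ (2 * a / D) ^ (1 / ε) := by
    rw [hyrw]
    exact Real.rpow_le_rpow hytpow.le hbound (by positivity)
  refine ⟨hfirst, fun hSt => ?_⟩
  have hts : 0 < t - S := sub_pos.2 hSt
  have hden : 0 < κ * ε * (t - S) := mul_pos (mul_pos hκ hε) hts
  have h2 : 2 * a / D ≤ 4 / (κ * ε * (t - S)) := by
    rw [div_le_div_iff₀ hDpos hden]
    nlinarith [hapos, mul_pos (mul_pos (mul_pos hκ hε) hapos) hts]
  calc y t ≤ (2 * a / D) ^ (1 / ε) := hfirst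
    _ ≤ (4 / (κ * ε * (t - S))) ^ (1 / ε) :=
      Real.rpow_le_rpow (div_nonneg (by linarith) hDpos.le) h2 (by positivity)
end

section
/- Let (X,d) be a complete bounded metric space, S(t) : X → X a semigroup, and suppose there exist t* > 0, a constant c̄ ≥ 0, and a precompact pseudometric d* on X such that d(S(t*)u₁, S(t*)u₂) ≤ (1/2)·d(u₁,u₂) + c̄·d*(u₁,u₂) for all u₁,u₂ ∈ X. Then S(t*) is an α-contraction, i.e., the Kuratowski measure of noncompactness of S(t*)(B) is at most (1/2)·α(B) for every bounded B ⊂ X. -/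
/-- Kuratowski measure of noncompactness. -/
noncomputable def kuratowski {X : Type*} [MetricSpace X] (B : Set X) : ℝ :=
  sInf {ε : ℝ | 0 < ε ∧ ∃ (n : ℕ) (U : Fin n → Set X),
    B ⊆ ⋃ i, U i ∧ ∀ i, Metric.diam (U i) < ε}

/-- Smoothing-plus-contraction criterion: if a semigroup `S` on a complete bounded
metric space satisfies
`d(S(t*)u₁, S(t*)u₂) ≤ (1/2) d(u₁,u₂) + c̄ d*(u₁,u₂)` for a precompact
pseudometric `d*`, then `S(t*)` is an `α`-contraction:
`α(S(t*)(B)) ≤ (1/2) α(B)` for every bounded `B`. -/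
theorem alpha_contraction {X : Type*} [MetricSpace X] [CompleteSpace X]
    (hbdd : Bornology.IsBounded (Set.univ : Set X))
    (S : ℝ → X → X)
    (hS0 : S 0 = id)
    (hSsemi : ∀ s t : ℝ, 0 ≤ s → 0 ≤ t → S (s + t) = S s ∘ S t)
    (tstar : ℝ) (htstar : 0 < tstar)
    (dstar : X → X → ℝ) (cbar : ℝ) (hcbar : 0 ≤ cbar)
    (hd_nonneg : ∀ u v, 0 ≤ dstar u v)
    (hd_self : ∀ u, dstar u u = 0)
    (hd_symm : ∀ u v, dstar u v = dstar v u)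
    (hd_tri : ∀ u v w, dstar u w ≤ dstar u v + dstar v w)
    (hprecomp : ∀ u : ℕ → X, ∃ φ : ℕ → ℕ, StrictMono φ ∧
      ∀ ε : ℝ, 0 < ε → ∃ N : ℕ, ∀ m ≥ N, ∀ n ≥ N,
        dstar (u (φ m)) (u (φ n)) < ε)
    (hcontr : ∀ u₁ u₂ : X,
      dist (S tstar u₁) (S tstar u₂) ≤ (1 / 2) * dist u₁ u₂ + cbar * dstar u₁ u₂) :
    ∀ B : Set X, Bornology.IsBounded B →
      kuratowski (S tstar '' B) ≤ (1 / 2) * kuratowski B := by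

  classical
  -- Total boundedness of X with respect to the pseudometric `dstar`.
  have tb : ∀ δ : ℝ, 0 < δ → ∃ s : Finset X, ∀ u : X, ∃ x ∈ s, dstar u x < δ := by
    intro δ hδ
    by_contra hc
    push_neg at hc
    obtain ⟨f, -, hf⟩ := exists_seq_of_forall_finset_exists (fun _ : X => True)
      (fun x y => δ ≤ dstar x y) (by
        intro s _
        obtain ⟨u, hu⟩ := hc s
        exact ⟨u, trivial, fun x hx => by
          have h := hu x hx
          show δ ≤ dstar x u
          rw [hd_symm]
          exact h⟩)
    obtain ⟨φ, hφ, hC⟩ := hprecomp f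
    obtain ⟨N, hN⟩ := hC δ hδ
    have h1 := hN N le_rfl (N + 1) (Nat.le_succ N)
    have h2 := hf (φ N) (φ (N + 1)) (hφ (Nat.lt_succ_self N))
    linarith
  -- The defining sets are nonempty and bounded below.
  have hTne : ∀ C : Set X, Set.Nonempty {ε : ℝ | 0 < ε ∧ ∃ (n : ℕ) (U : Fin n → Set X),
      C ⊆ ⋃ i, U i ∧ ∀ i, Metric.diam (U i) < ε} := by
    intro C
    have hd0 : 0 ≤ Metric.diam (Set.univ : Set X) := Metric.diam_nonneg
    refine ⟨Metric.diam (Set.univ : Set X) + 1, by linarith, 1, fun _ => Set.univ, ?_, ?_⟩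
    · intro x _; exact Set.mem_iUnion.2 ⟨0, Set.mem_univ x⟩
    · intro i; exact lt_add_one (Metric.diam (Set.univ : Set X))
  have hTbdd : ∀ C : Set X, BddBelow {ε : ℝ | 0 < ε ∧ ∃ (n : ℕ) (U : Fin n → Set X),
      C ⊆ ⋃ i, U i ∧ ∀ i, Metric.diam (U i) < ε} :=
    fun C => ⟨0, fun ε hε => hε.1.le⟩
  intro B _hB
  have hk_nonneg : 0 ≤ kuratowski B := le_csInf (hTne B) fun ε hε => hε.1.le
  refine le_of_forall_gt_imp_ge_of_dense ?_
  intro ε₀ hε₀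
  have hε₀pos : 0 < ε₀ := lt_of_le_of_lt (by linarith) hε₀
  have hlt : kuratowski B < 2 * ε₀ := by linarith
  obtain ⟨ε', hε'mem, hε'lt⟩ :=
    exists_lt_of_csInf_lt (hTne B) (show sInf _ < 2 * ε₀ from hlt)
  obtain ⟨hε'pos, n, U, hUcov, hUdiam⟩ := hε'mem
  set δ : ℝ := (ε₀ - (1 / 2) * ε') / (cbar + 1) with hδdef
  have hcb1 : (0 : ℝ) < cbar + 1 := by linarith
  have hδpos : 0 < δ := div_pos (by linarith) hcb1
  have hδmul : δ * (cbar + 1) = ε₀ - (1 / 2) * ε' := div_mul_cancel₀ _ (by linarith)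
  obtain ⟨s, hs⟩ := tb (δ / 2) (by linarith)
  set m : ℕ := s.card with hm
  set c : Fin m → X := fun j => ((s.equivFin.symm j : s) : X) with hc
  set W : Fin (n * m) → Set X := fun k =>
    S tstar '' ((B ∩ U (finProdFinEquiv.symm k).1) ∩
      {u | dstar u (c (finProdFinEquiv.symm k).2) < δ / 2}) with hW
  have hrbound : (1 / 2) * ε' + cbar * δ < ε₀ := by
    have h1 : cbar * δ < (cbar + 1) * δ := by nlinarith
    nlinarith
  have hrnonneg : 0 ≤ (1 / 2) * ε' + cbar * δ := by nlinarith
  show sInf _ ≤ ε₀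
  refine csInf_le (hTbdd _) ⟨hε₀pos, n * m, W, ?_, ?_⟩
  · rintro y ⟨u, huB, rfl⟩
    obtain ⟨i, hui⟩ := Set.mem_iUnion.1 (hUcov huB)
    obtain ⟨x, hxs, hxd⟩ := hs u
    refine Set.mem_iUnion.2 ⟨finProdFinEquiv (i, s.equivFin ⟨x, hxs⟩), ?_⟩
    refine ⟨u, ⟨⟨huB, ?_⟩, ?_⟩, rfl⟩
    · simpa using hui
    · simpa [hc] using hxd
  · intro k
    have hdle : Metric.diam (W k) ≤ (1 / 2) * ε' + cbar * δ := by
      refine Metric.diam_le_of_forall_dist_le hrnonneg ?_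
      rintro y₁ ⟨u₁, ⟨⟨hB1, hU1⟩, hV1⟩, rfl⟩ y₂ ⟨u₂, ⟨⟨hB2, hU2⟩, hV2⟩, rfl⟩
      have hUb : Bornology.IsBounded (U (finProdFinEquiv.symm k).1) :=
        hbdd.subset (Set.subset_univ _)
      have hdist : dist u₁ u₂ < ε' :=
        lt_of_le_of_lt (Metric.dist_le_diam_of_mem hUb hU1 hU2)
          (hUdiam (finProdFinEquiv.symm k).1)
      have hV1' : dstar u₁ (c (finProdFinEquiv.symm k).2) < δ / 2 := hV1
      have hV2' : dstar u₂ (c (finProdFinEquiv.symm k).2) < δ / 2 := hV2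
      have hdstar : dstar u₁ u₂ < δ := by
        have htri := hd_tri u₁ (c (finProdFinEquiv.symm k).2) u₂
        have hsymm := hd_symm (c (finProdFinEquiv.symm k).2) u₂
        linarith [hsymm ▸ htri, hV2']
      have hco := hcontr u₁ u₂
      have h1 : cbar * dstar u₁ u₂ ≤ cbar * δ :=
        mul_le_mul_of_nonneg_left hdstar.le hcbar
      linarith
    exact lt_of_le_of_lt hdle hrbound
end
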